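/- For any continuation K and terms s, u: if SN(s) and SN(K@(u{s/x})), then SN(K@(let x ⇐ pure(s) in u)). -/

import Mathlib

/-!
Metalanguage for algebraic effects (Moggi-style `let` + effect/function symbols),
with the Recursive Path Ordering, following the paper.

Terms use de Bruijn indices.  A signature assigns each rewritable symbol an
arity, tells whether it is an effect symbol or a function symbol, and (for
function symbols) gives argument types and a result type.
-/

/-- Types of the metalanguage: base types, effect (computation) types `E T`,
and arrow types. -/
inductive Ty (B : Type) : Type where
  | base : B → Ty B
  | eff : Ty B → Ty B
  | arrow : Ty B → Ty B → Ty B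

/-- A signature of rewritable symbols. -/
structure Signature (Sym B : Type) : Type where
  arity : Sym → ℕ
  isEffect : Sym → Prop
  argTy : (γ : Sym) → Fin (arity γ) → Ty B
  resTy : Sym → Ty B

/-- Terms of the metalanguage (de Bruijn indices):
variables, λ-abstraction, application, `pure`, symbol application, and `let`. -/
inductive Tm {Sym B : Type} (Sg : Signature Sym B) : Type where
  | var : ℕ → Tm Sg
  | lam : Tm Sg → Tm Sg
  | app : Tm Sg → Tm Sg → Tm Sg
  | pure : Tm Sg → Tm Sg
  | sym : (γ : Sym) → (Fin (Sg.arity γ) → Tm Sg) → Tm Sg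
  | letin : Tm Sg → Tm Sg → Tm Sg

namespace Tm

variable {Sym B : Type} {Sg : Signature Sym B}

/-- Lift a renaming under a binder. -/
def upRen (ρ : ℕ → ℕ) : ℕ → ℕ
  | 0 => 0
  | n + 1 => ρ n + 1

/-- Renaming of de Bruijn variables. -/
def rename (ρ : ℕ → ℕ) : Tm Sg → Tm Sg
  | .var n => .var (ρ n)
  | .lam u => .lam (u.rename (upRen ρ))
  | .app s t => .app (s.rename ρ) (t.rename ρ)
  | .pure t => .pure (t.rename ρ)
  | .sym γ ts => .sym γ (fun i => (ts i).rename ρ)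
  | .letin t u => .letin (t.rename ρ) (u.rename (upRen ρ))

/-- Lift a substitution under a binder. -/
def upSub (σ : ℕ → Tm Sg) : ℕ → Tm Sg
  | 0 => .var 0
  | n + 1 => (σ n).rename Nat.succ

/-- Simultaneous (capture-avoiding) substitution. -/
def subst (σ : ℕ → Tm Sg) : Tm Sg → Tm Sg
  | .var n => σ n
  | .lam u => .lam (u.subst (upSub σ))
  | .app s t => .app (s.subst σ) (t.subst σ)
  | .pure t => .pure (t.subst σ)
  | .sym γ ts => .sym γ (fun i => (ts i).subst σ)
  | .letin t u => .letin (t.subst σ) (u.subst (upSub σ))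

/-- `subst0 t u` is `u{t/x}`: substitute `t` for the outermost variable of `u`. -/
def subst0 (t : Tm Sg) (u : Tm Sg) : Tm Sg :=
  u.subst (fun n => match n with | 0 => t | n + 1 => .var n)

/-- `FreeIn x t`: the de Bruijn variable `x` occurs free in `t`. -/
def FreeIn : Tm Sg → ℕ → Prop
  | .var n, x => x = n
  | .lam u, x => u.FreeIn (x + 1)
  | .app s t, x => s.FreeIn x ∨ t.FreeIn x
  | .pure t, x => t.FreeIn x
  | .sym _ ts, x => ∃ i, (ts i).FreeIn x
  | .letin t u, x => t.FreeIn x ∨ u.FreeIn (x + 1)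

end Tm

/-- The recursive path ordering `s ≻ t` generated by a precedence `gt` on symbols:
(1) same head symbol, lexicographically smaller arguments, and `s` dominates every
argument of `t`; (2) smaller head symbol and `s` dominates every argument of `t`;
(3) some argument `sᵢ` of `s` satisfies `sᵢ ⪰ t`. -/
inductive RPO {Sym B : Type} {Sg : Signature Sym B} (gt : Sym → Sym → Prop) :
    Tm Sg → Tm Sg → Prop where
  | lexArgs {γ : Sym} {s t : Fin (Sg.arity γ) → Tm Sg} (i : Fin (Sg.arity γ))
      (hpre : ∀ j, j < i → s j = t j) (hlt : RPO gt (s i) (t i))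
      (hdom : ∀ j, RPO gt (.sym γ s) (t j)) :
      RPO gt (.sym γ s) (.sym γ t)
  | symGt {γ γ' : Sym} {s : Fin (Sg.arity γ) → Tm Sg} {t : Fin (Sg.arity γ') → Tm Sg}
      (hγ : gt γ γ') (hdom : ∀ j, RPO gt (.sym γ s) (t j)) :
      RPO gt (.sym γ s) (.sym γ' t)
  | subtermLt {γ : Sym} {s : Fin (Sg.arity γ) → Tm Sg} (i : Fin (Sg.arity γ)) {t : Tm Sg}
      (h : RPO gt (s i) t) :
      RPO gt (.sym γ s) t
  | subtermEq {γ : Sym} {s : Fin (Sg.arity γ) → Tm Sg} (i : Fin (Sg.arity γ)) {t : Tm Sg}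
      (h : s i = t) :
      RPO gt (.sym γ s) t

/-- The relation `≻̇`: the compatible closure (closure under all term contexts)
of the union of the RPO `≻` and the metalanguage rewrites `⇝ml`
(abs-β, let-β, let-assoc, eff-assoc). -/
inductive Step {Sym B : Type} {Sg : Signature Sym B} (gt : Sym → Sym → Prop) :
    Tm Sg → Tm Sg → Prop where
  | rpo {s t : Tm Sg} : RPO gt s t → Step gt s t
  | beta {u t : Tm Sg} : Step gt (.app (.lam u) t) (Tm.subst0 t u)
  | letBeta {t u : Tm Sg} : Step gt (.letin (.pure t) u) (Tm.subst0 t u)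
  | letAssoc {t₁ t₂ u : Tm Sg} :
      Step gt (.letin (.letin t₁ t₂) u)
        (.letin t₁ (.letin t₂ (u.rename (Tm.upRen Nat.succ))))
  | effAssoc {e : Sym} {ts : Fin (Sg.arity e) → Tm Sg} {u : Tm Sg} (he : Sg.isEffect e) :
      Step gt (.letin (.sym e ts) u) (.sym e fun i => .letin (ts i) u)
  | congLam {u u' : Tm Sg} : Step gt u u' → Step gt (.lam u) (.lam u')
  | congApp₁ {s s' t : Tm Sg} : Step gt s s' → Step gt (.app s t) (.app s' t)
  | congApp₂ {s t t' : Tm Sg} : Step gt t t' → Step gt (.app s t) (.app s t')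
  | congPure {t t' : Tm Sg} : Step gt t t' → Step gt (.pure t) (.pure t')
  | congSym {γ : Sym} {ts : Fin (Sg.arity γ) → Tm Sg} {i : Fin (Sg.arity γ)} {t' : Tm Sg} :
      Step gt (ts i) t' → Step gt (.sym γ ts) (.sym γ (Function.update ts i t'))
  | congLet₁ {t t' u : Tm Sg} : Step gt t t' → Step gt (.letin t u) (.letin t' u)
  | congLet₂ {t u u' : Tm Sg} : Step gt u u' → Step gt (.letin t u) (.letin t u')

/-- `SN gt t`: `t` is strongly normalizing under `≻̇` (every reduction sequence
from `t` terminates, i.e. `t` is accessible for the converse of `Step gt`). -/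
def SN {Sym B : Type} {Sg : Signature Sym B} (gt : Sym → Sym → Prop) (t : Tm Sg) : Prop :=
  Acc (fun a b => Step gt b a) t

/-- Continuations: stacks of frames `let x ⇐ [] in u`. -/
inductive Kont {Sym B : Type} (Sg : Signature Sym B) : Type where
  | nil : Kont Sg
  | cons : Kont Sg → Tm Sg → Kont Sg

namespace Kont

variable {Sym B : Type} {Sg : Signature Sym B}

/-- `K.plug t` = `K@t`: plug a term into the hole of a continuation. -/
def plug : Kont Sg → Tm Sg → Tm Sg
  | .nil, t => t
  | .cons K u, t => K.plug (.letin t u)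

/-- `|K|`: the number of frames of a continuation. -/
def len : Kont Sg → ℕ
  | .nil => 0
  | .cons K _ => K.len + 1

end Kont

/-- The reducibility predicate, by recursion on the type:
`Red B t = SN t`; `Red (S→T) s` means `s t` is reducible for every reducible `t`;
`Red (E T) t` means `K@t` is SN for every continuation `K ∈ Red_T^⊤`. -/
def Red {Sym B : Type} {Sg : Signature Sym B} (gt : Sym → Sym → Prop) :
    Ty B → Tm Sg → Prop
  | .base _, t => SN gt t
  | .arrow S T, s => ∀ t : Tm Sg, Red gt S t → Red gt T (.app s t)
  | .eff T, t => ∀ K : Kont Sg,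
      (∀ u : Tm Sg, Red gt T u → SN gt (K.plug (.pure u))) → SN gt (K.plug t)

/-- `Red_T^⊤(K)`: `K@pure(t)` is SN for every `t ∈ Red_T`. -/
def RedTop {Sym B : Type} {Sg : Signature Sym B} (gt : Sym → Sym → Prop)
    (T : Ty B) (K : Kont Sg) : Prop :=
  ∀ t : Tm Sg, Red gt T t → SN gt (K.plug (.pure t))

/-- Typing judgment `Γ ⊢ t : T` of the metalanguage (contexts are lists of types,
read by de Bruijn index).  Effect symbols take `n` arguments of a common type
`E T` and return `E T`; function symbols follow their declared signature. -/
inductive HasTy {Sym B : Type} (Sg : Signature Sym B) :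
    List (Ty B) → Tm Sg → Ty B → Prop where
  | var {Γ : List (Ty B)} {n : ℕ} {T : Ty B} :
      Γ[n]? = some T → HasTy Sg Γ (.var n) T
  | lam {Γ : List (Ty B)} {S T : Ty B} {u : Tm Sg} :
      HasTy Sg (S :: Γ) u T → HasTy Sg Γ (.lam u) (.arrow S T)
  | app {Γ : List (Ty B)} {S T : Ty B} {s t : Tm Sg} :
      HasTy Sg Γ s (.arrow S T) → HasTy Sg Γ t S → HasTy Sg Γ (.app s t) T
  | pure {Γ : List (Ty B)} {T : Ty B} {t : Tm Sg} :
      HasTy Sg Γ t T → HasTy Sg Γ (.pure t) (.eff T)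
  | letin {Γ : List (Ty B)} {S T : Ty B} {t u : Tm Sg} :
      HasTy Sg Γ t (.eff S) → HasTy Sg (S :: Γ) u (.eff T) →
      HasTy Sg Γ (.letin t u) (.eff T)
  | effSym {Γ : List (Ty B)} {T : Ty B} {e : Sym} {ts : Fin (Sg.arity e) → Tm Sg} :
      Sg.isEffect e → (∀ i, HasTy Sg Γ (ts i) (.eff T)) →
      HasTy Sg Γ (.sym e ts) (.eff T)
  | funSym {Γ : List (Ty B)} {f : Sym} {ts : Fin (Sg.arity f) → Tm Sg} :
      ¬ Sg.isEffect f → (∀ i, HasTy Sg Γ (ts i) (Sg.argTy f i)) →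
      HasTy Sg Γ (.sym f ts) (Sg.resTy f)


/-!
The proof is by induction on `SN(s)`, then on `SN(K@(u{s/x}))`, then on the length of `K`.
A step out of `K@(let x ⇐ pure(s) in u)` is one of the following. Let-β yields `K@(u{s/x})`
itself. A step `s ≻̇ s'` is matched by the reduction `K@(u{s/x}) ≻̇* K@(u{s'/x})` that
rewrites every copy of `s`. A step in `u` (as `≻̇` is stable under substitution) or in a frame
of `K` is matched by one step of `K@(u{s/x})`. Finally, let-assoc with the innermost
frame `let y ⇐ [] in u₀` of `K = K₂ ∘ (let y ⇐ [] in u₀)` yields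
`K₂@(let x ⇐ pure(s) in (let y ⇐ u in u₀))`, which has a shorter continuation and, as
`x ∉ FV(u₀)`, the same instance `K₂@(let y ⇐ u{s/x} in u₀) = K@(u{s/x})`.
-/

open Relation

namespace Tm

variable {Sym B : Type} {Sg : Signature Sym B}

def sub0 (t : Tm Sg) : ℕ → Tm Sg
  | 0 => t
  | n + 1 => .var n

theorem subst0_eq_subst (t u : Tm Sg) : subst0 t u = u.subst (sub0 t) := rfl

theorem upSub_var_comp (ρ : ℕ → ℕ) :
    upSub (Sg := Sg) (fun n => .var (ρ n)) = fun n => .var (upRen ρ n) := by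
  funext n; cases n <;> rfl

theorem rename_eq_subst (t : Tm Sg) (ρ : ℕ → ℕ) :
    t.rename ρ = t.subst (fun n => .var (ρ n)) := by
  induction t generalizing ρ <;> simp_all [rename, subst, upSub_var_comp]

theorem upSub_comp_upRen (σ : ℕ → Tm Sg) (ρ : ℕ → ℕ) :
    (fun n => upSub σ (upRen ρ n)) = upSub (fun n => σ (ρ n)) := by
  funext n; cases n <;> rfl

theorem subst_rename (t : Tm Sg) (ρ : ℕ → ℕ) (σ : ℕ → Tm Sg) :
    (t.rename ρ).subst σ = t.subst (fun n => σ (ρ n)) := by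
  induction t generalizing ρ σ <;> simp_all [rename, subst, upSub_comp_upRen]

theorem rename_rename (t : Tm Sg) (ρ ρ' : ℕ → ℕ) :
    (t.rename ρ).rename ρ' = t.rename (fun n => ρ' (ρ n)) := by
  rw [rename_eq_subst (t.rename ρ), subst_rename, rename_eq_subst]

theorem rename_comp_upSub (σ : ℕ → Tm Sg) (ρ : ℕ → ℕ) :
    (fun n => (upSub σ n).rename (upRen ρ)) = upSub (fun n => (σ n).rename ρ) := by
  funext n
  cases n with
  | zero => rfl
  | succ n => simp only [upSub, rename_rename]; rfl

theorem rename_subst (t : Tm Sg) (σ : ℕ → Tm Sg) (ρ : ℕ → ℕ) :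
    (t.subst σ).rename ρ = t.subst (fun n => (σ n).rename ρ) := by
  induction t generalizing σ ρ <;> simp_all [rename, subst, rename_comp_upSub]

theorem subst_comp_upSub (σ τ : ℕ → Tm Sg) :
    (fun n => (upSub σ n).subst (upSub τ)) = upSub (fun n => (σ n).subst τ) := by
  funext n
  cases n with
  | zero => rfl
  | succ n => simp only [upSub, subst_rename, rename_subst]

theorem subst_subst (t : Tm Sg) (σ τ : ℕ → Tm Sg) :
    (t.subst σ).subst τ = t.subst (fun n => (σ n).subst τ) := by
  induction t generalizing σ τ <;> simp_all [subst, subst_comp_upSub]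

theorem upSub_var : upSub (Sg := Sg) .var = .var := by
  funext n; cases n <;> rfl

theorem subst_var (t : Tm Sg) : t.subst .var = t := by
  induction t <;> simp_all [subst, upSub_var]

theorem subst0_subst (t u : Tm Sg) (σ : ℕ → Tm Sg) :
    (subst0 t u).subst σ = subst0 (t.subst σ) (u.subst (upSub σ)) := by
  simp only [subst0_eq_subst, subst_subst]
  congr 1
  funext n
  cases n with
  | zero => rfl
  | succ n => simp only [sub0, upSub, subst_rename]; exact (subst_var _).symm

theorem subst0_letin_weaken (s u u₀ : Tm Sg) :
    subst0 s (.letin u (u₀.rename (upRen Nat.succ))) = .letin (subst0 s u) u₀ := by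
  simp only [subst0_eq_subst, subst, subst_rename]
  congr
  conv_rhs => rw [← subst_var u₀]
  congr 1
  funext n
  cases n <;> rfl

end Tm

section Step

variable {Sym B : Type} {Sg : Signature Sym B} {gt : Sym → Sym → Prop}

theorem RPO.map (F : Tm Sg → Tm Sg)
    (hF : ∀ (γ : Sym) (ts : Fin (Sg.arity γ) → Tm Sg), F (.sym γ ts) = .sym γ (F ∘ ts))
    {a b : Tm Sg} (h : RPO gt a b) : RPO gt (F a) (F b) := by
  induction h with
  | lexArgs i hpre _ _ ihlt ihdom =>
      rw [hF, hF]
      rw [hF] at ihdom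
      exact .lexArgs i (fun j hj => congrArg F (hpre j hj)) ihlt ihdom
  | symGt hγ _ ih =>
      rw [hF, hF]
      rw [hF] at ih
      exact .symGt hγ ih
  | subtermLt i _ ih => rw [hF]; exact .subtermLt i ih
  | subtermEq i h => rw [hF]; exact .subtermEq i (congrArg F h)

theorem Step.subst {a b : Tm Sg} (h : Step gt a b) (σ : ℕ → Tm Sg) :
    Step gt (a.subst σ) (b.subst σ) := by
  induction h generalizing σ with
  | rpo h => exact .rpo (h.map _ fun _ _ => rfl)
  | beta => rw [Tm.subst0_subst]; exact .beta
  | letBeta => rw [Tm.subst0_subst]; exact .letBeta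
  | @letAssoc t₁ t₂ u =>
      have hweaken : (u.rename (Tm.upRen Nat.succ)).subst (Tm.upSub (Tm.upSub σ))
          = (u.subst (Tm.upSub σ)).rename (Tm.upRen Nat.succ) := by
        rw [Tm.subst_rename, Tm.rename_subst]
        congr 1
        funext n
        cases n with
        | zero => rfl
        | succ n => simp only [Tm.upRen, Tm.upSub, Tm.rename_rename]
      simp only [Tm.subst, hweaken]
      exact .letAssoc
  | effAssoc he => exact .effAssoc he
  | congLam _ ih => exact .congLam (ih _)
  | congApp₁ _ ih => exact .congApp₁ (ih σ)
  | congApp₂ _ ih => exact .congApp₂ (ih σ)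
  | congPure _ ih => exact .congPure (ih σ)
  | @congSym γ ts i t' _ ih =>
      have := Step.congSym (gt := gt) (ts := fun j => (ts j).subst σ) (i := i) (ih σ)
      rwa [← Function.comp_def, ← Function.comp_update] at this
  | congLet₁ _ ih => exact .congLet₁ (ih σ)
  | congLet₂ _ ih => exact .congLet₂ (ih _)

theorem Step.rename {a b : Tm Sg} (h : Step gt a b) (ρ : ℕ → ℕ) :
    Step gt (a.rename ρ) (b.rename ρ) := by
  simpa only [Tm.rename_eq_subst] using h.subst _

theorem Step.plug (K : Kont Sg) {t t' : Tm Sg} (h : Step gt t t') :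
    Step gt (K.plug t) (K.plug t') := by
  induction K generalizing t t' with
  | nil => exact h
  | cons K u ih => exact ih (.congLet₁ h)

theorem SN.of_reflTransGen {a b : Tm Sg} (ha : SN gt a) (hab : ReflTransGen (Step gt) a b) :
    SN gt b := by
  induction hab with
  | refl => exact ha
  | tail _ hstep ih => exact ih.inv hstep

theorem Step.reflTransGen_map {f : Tm Sg → Tm Sg}
    (hf : ∀ {a b}, Step gt a b → Step gt (f a) (f b)) {a b : Tm Sg}
    (h : ReflTransGen (Step gt) a b) : ReflTransGen (Step gt) (f a) (f b) :=
  ReflTransGen.lift f (fun _ _ => hf) _ _ h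

theorem Step.reflTransGen_sym_update {γ : Sym} (ts : Fin (Sg.arity γ) → Tm Sg)
    (i : Fin (Sg.arity γ)) {b : Tm Sg} (h : ReflTransGen (Step gt) (ts i) b) :
    ReflTransGen (Step gt) (.sym γ ts) (.sym γ (Function.update ts i b)) := by
  induction h with
  | refl => simp only [Function.update_eq_self]; rfl
  | @tail b c _ hbc ih =>
      refine ih.tail ?_
      have := Step.congSym (ts := Function.update ts i b) (i := i) (by simpa using hbc)
      simpa using this

theorem Step.reflTransGen_sym {γ : Sym} {ts ts' : Fin (Sg.arity γ) → Tm Sg}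
    (h : ∀ i, ReflTransGen (Step gt) (ts i) (ts' i)) :
    ReflTransGen (Step gt) (.sym γ ts) (.sym γ ts') := by
  classical
  suffices ∀ S : Finset (Fin (Sg.arity γ)),
      ReflTransGen (Step gt) (.sym γ ts) (.sym γ fun i => if i ∈ S then ts' i else ts i) by
    simpa using this Finset.univ
  intro S
  induction S using Finset.induction_on with
  | empty => simp only [Finset.notMem_empty, if_false]; rfl
  | insert a S ha ih =>
      have hupdate : (fun i => if i ∈ insert a S then ts' i else ts i)
          = Function.update (fun i => if i ∈ S then ts' i else ts i) a (ts' a) := by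
        funext i
        by_cases hi : i = a <;> simp [hi]
      rw [hupdate]
      exact ih.trans (Step.reflTransGen_sym_update _ a (by simpa [ha] using h a))

theorem Step.reflTransGen_subst (u : Tm Sg) {σ σ' : ℕ → Tm Sg}
    (h : ∀ n, ReflTransGen (Step gt) (σ n) (σ' n)) :
    ReflTransGen (Step gt) (u.subst σ) (u.subst σ') := by
  have hup : ∀ {σ σ' : ℕ → Tm Sg}, (∀ n, ReflTransGen (Step gt) (σ n) (σ' n)) →
      ∀ n, ReflTransGen (Step gt) (Tm.upSub σ n) (Tm.upSub σ' n) := by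
    intro σ σ' h n
    cases n with
    | zero => rfl
    | succ n => exact Step.reflTransGen_map (Step.rename · _) (h n)
  induction u generalizing σ σ' with
  | var n => exact h n
  | lam u ih => exact Step.reflTransGen_map .congLam (ih (hup h))
  | app s t ihs iht =>
      exact (Step.reflTransGen_map (f := (Tm.app · _)) .congApp₁ (ihs h)).trans
        (Step.reflTransGen_map (f := (Tm.app _ ·)) .congApp₂ (iht h))
  | pure t ih => exact Step.reflTransGen_map .congPure (ih h)
  | sym γ ts ih => exact Step.reflTransGen_sym fun i => ih i h
  | letin t u iht ihu =>
      exact (Step.reflTransGen_map (f := (Tm.letin · _)) .congLet₁ (iht h)).trans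
        (Step.reflTransGen_map (f := (Tm.letin _ ·)) .congLet₂ (ihu (hup h)))

theorem Step.reflTransGen_subst0 (u : Tm Sg) {s s' : Tm Sg} (h : Step gt s s') :
    ReflTransGen (Step gt) (Tm.subst0 s u) (Tm.subst0 s' u) :=
  Step.reflTransGen_subst u fun n => by cases n; exacts [.single h, .refl]

inductive LetRedex : Tm Sg → Tm Sg → Prop
  | letBeta {t u : Tm Sg} : LetRedex (.letin (.pure t) u) (Tm.subst0 t u)
  | letAssoc {t₁ t₂ u : Tm Sg} :
      LetRedex (.letin (.letin t₁ t₂) u) (.letin t₁ (.letin t₂ (u.rename (Tm.upRen Nat.succ))))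
  | effAssoc {e : Sym} {ts : Fin (Sg.arity e) → Tm Sg} {u : Tm Sg} (he : Sg.isEffect e) :
      LetRedex (.letin (.sym e ts) u) (.sym e fun i => .letin (ts i) u)

theorem Step.letin_cases {t u r : Tm Sg} (h : Step gt (.letin t u) r) :
    LetRedex (.letin t u) r ∨ (∃ t', Step gt t t' ∧ r = .letin t' u) ∨
      ∃ u', Step gt u u' ∧ r = .letin t u' := by
  cases h with
  | rpo h => cases h
  | letBeta => exact .inl .letBeta
  | letAssoc => exact .inl .letAssoc
  | effAssoc he => exact .inl (.effAssoc he)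
  | congLet₁ h => exact .inr (.inl ⟨_, h, rfl⟩)
  | congLet₂ h => exact .inr (.inr ⟨_, h, rfl⟩)

/-- The middle case includes let-assoc merging two frames of `K`. -/
theorem Step.plug_cases {K : Kont Sg} {t r : Tm Sg} (h : Step gt (K.plug t) r) :
    (∃ t', Step gt t t' ∧ r = K.plug t') ∨
    (∃ K' : Kont Sg, r = K'.plug t ∧ ∀ w, Step gt (K.plug w) (K'.plug w)) ∨
    ∃ K₂ u₀ r₀, K = .cons K₂ u₀ ∧ LetRedex (.letin t u₀) r₀ ∧ r = K₂.plug r₀ := by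
  induction K generalizing t with
  | nil => exact .inl ⟨r, h, rfl⟩
  | cons K u₀ ih =>
      rcases ih h with ⟨t', ht', rfl⟩ | ⟨K', rfl, hK⟩ | ⟨K₂, u₁, r₀, rfl, hredex, rfl⟩
      · rcases ht'.letin_cases with hredex | ⟨t', ht, rfl⟩ | ⟨u', hu, rfl⟩
        · exact .inr (.inr ⟨K, u₀, t', rfl, hredex, rfl⟩)
        · exact .inl ⟨t', ht, rfl⟩
        · exact .inr (.inl ⟨.cons K u', rfl, fun w => Step.plug K (.congLet₂ hu)⟩)
      · exact .inr (.inl ⟨.cons K' u₀, rfl, fun w => hK _⟩)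
      · cases hredex
        exact .inr (.inl ⟨.cons K₂ (.letin u₀ (u₁.rename (Tm.upRen Nat.succ))),
          rfl, fun w => Step.plug K₂ .letAssoc⟩)

theorem Step.letin_pure_cases {s u r : Tm Sg} (h : Step gt (.letin (.pure s) u) r) :
    r = Tm.subst0 s u ∨ (∃ s', Step gt s s' ∧ r = .letin (.pure s') u) ∨
      ∃ u', Step gt u u' ∧ r = .letin (.pure s) u' := by
  rcases h.letin_cases with hredex | ⟨t', ht, rfl⟩ | hu
  · cases hredex
    exact .inl rfl
  · cases ht with
    | rpo h => cases h
    | congPure hs => exact .inr (.inl ⟨_, hs, rfl⟩)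
  · exact .inr (.inr hu)

end Step

theorem sn_let_pure_general {Sym B : Type} {Sg : Signature Sym B} (gt : Sym → Sym → Prop)
    (K : Kont Sg) (s u : Tm Sg)
    (hs : SN gt s) (hu : SN gt (K.plug (Tm.subst0 s u))) :
    SN gt (K.plug (Tm.letin (Tm.pure s) u)) := by
  generalize hp : K.plug (Tm.subst0 s u) = p at hu
  induction hs generalizing K u p with | intro s _ ihs =>
  induction hu generalizing K u with | intro p hacc ihp =>
  induction hlen : K.len using Nat.strong_induction_on generalizing K u with | _ n ihn =>
  subst hp hlen
  have hp_sn : SN gt (K.plug (Tm.subst0 s u)) := Acc.intro _ hacc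
  refine Acc.intro _ fun r hr => ?_
  rcases hr.plug_cases with ⟨t', ht, rfl⟩ | ⟨K', rfl, hK⟩ | ⟨K₂, u₀, r₀, rfl, hredex, rfl⟩
  · rcases ht.letin_pure_cases with rfl | ⟨s', hs', rfl⟩ | ⟨u', hu', rfl⟩
    · exact hp_sn
    · exact ihs s' hs' K u _ rfl <|
        hp_sn.of_reflTransGen (Step.reflTransGen_map (Step.plug K) (hs'.reflTransGen_subst0 u))
    · exact ihp _ (Step.plug K (hu'.subst _)) K u' rfl
  · exact ihp _ (hK _) K' u rfl
  · cases hredex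
    exact ihn K₂.len (by simp [Kont.len]) K₂ _ (by rw [Tm.subst0_letin_weaken]; rfl) rfl

/-- For any continuation `K` and terms `s`, `u`: if `SN(s)` and
`SN(K@(u{s/x}))`, then `SN(K@(let x ⇐ pure(s) in u))`. -/
theorem sn_let_pure {Sym B : Type} {Sg : Signature Sym B} (gt : Sym → Sym → Prop)
    (hwf : WellFounded (fun a b : Sym => gt b a)) (htrans : Transitive gt)
    (K : Kont Sg) (s u : Tm Sg)
    (hs : SN gt s) (hu : SN gt (K.plug (Tm.subst0 s u))) :
    SN gt (K.plug (Tm.letin (Tm.pure s) u)) :=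
  sn_let_pure_general gt K s u hs hu
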